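/- Let G be a connected finite simple graph on n ≥ 2 vertices with diameter D. Then EE(G) > e^{(n−1)^{1/D}} + (n − 1) − (n−1)^{1/D}. -/

import Mathlib

/-!
Let `λ₁` be the largest adjacency eigenvalue. As the adjacency matrix `A` has nonnegative entries,
`|λᵢ| ≤ λ₁` for every `i`, so `𝟙ᵀ Aᴰ 𝟙 ≤ n λ₁ᴰ`. Conversely, for every vertex `u` and every `v ≠ u`
there is a walk of length `D` from `u` whose last edge has `v` as its endpoint farther from `u`
(a shortest `u`–`v` path, continued by going back and forth along its last edge), so
`𝟙ᵀ Aᴰ 𝟙 ≥ n (n - 1)` and `λ₁ ≥ (n - 1)^{1/D}`. Since the eigenvalues sum to `tr A = 0`, the bound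
`eˣ ≥ 1 + x` on `λ₂, …, λₙ`, strict because they do not all vanish, gives
`EE > e^{λ₁} + (n - 1) - λ₁`, and `x ↦ eˣ - x` is increasing on `[0, ∞)`.
-/

open Finset Real

namespace EstradaIndexPaper

/-- The adjacency matrix of a simple graph over `ℝ` is Hermitian. -/
theorem adjMatrix_isHermitian {n : ℕ} (G : SimpleGraph (Fin n)) [DecidableRel G.Adj] :
    (G.adjMatrix ℝ).IsHermitian := by
  unfold Matrix.IsHermitian
  rw [Matrix.conjTranspose_eq_transpose_of_trivial]
  exact G.isSymm_adjMatrix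

/-- The eigenvalues of the adjacency matrix of `G`. -/
noncomputable def eig {n : ℕ} (G : SimpleGraph (Fin n)) [DecidableRel G.Adj] : Fin n → ℝ :=
  (adjMatrix_isHermitian G).eigenvalues

/-- The Estrada index of `G`: the sum of `e^{λ_i}` over the adjacency eigenvalues. -/
noncomputable def EE {n : ℕ} (G : SimpleGraph (Fin n)) [DecidableRel G.Adj] : ℝ :=
  ∑ i, Real.exp (eig G i)

/-- The largest adjacency eigenvalue `λ₁` of `G`. -/
noncomputable def lam1 {n : ℕ} (G : SimpleGraph (Fin n)) [DecidableRel G.Adj] : ℝ :=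
  ⨆ i, eig G i

/-- The Randić index `R(G) = Σ_{ij ∈ E(G)} (d(i)d(j))^{-1/2}`. -/
noncomputable def randic {n : ℕ} (G : SimpleGraph (Fin n)) [DecidableRel G.Adj] : ℝ :=
  ∑ e ∈ G.edgeFinset,
    Sym2.lift ⟨fun i j => (Real.sqrt ((G.degree i : ℝ) * (G.degree j : ℝ)))⁻¹,
      fun i j => by simp [mul_comm]⟩ e

/-- The general Randić index `R_{1/2}(G) = Σ_{ij ∈ E(G)} (d(i)d(j))^{1/2}`. -/
noncomputable def randicHalf {n : ℕ} (G : SimpleGraph (Fin n)) [DecidableRel G.Adj] : ℝ :=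
  ∑ e ∈ G.edgeFinset,
    Sym2.lift ⟨fun i j => Real.sqrt ((G.degree i : ℝ) * (G.degree j : ℝ)),
      fun i j => by simp [mul_comm]⟩ e

section Walks

open SimpleGraph

variable {V : Type*} {G : SimpleGraph V}

lemma exists_walk_length_eq_same_last_edge {u v : V} (p : G.Walk u v) (hp : ¬p.Nil) {L : ℕ}
    (hL : p.length ≤ L) :
    ∃ (z : V) (q : G.Walk u z), q.length = L ∧ s(q.penultimate, z) = s(p.penultimate, v) := by
  induction L, hL using Nat.le_induction with
  | base => exact ⟨v, p, rfl, rfl⟩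
  | succ L hL ih =>
    obtain ⟨z, q, hq, hqp⟩ := ih
    have hq0 : ¬q.Nil := by
      rw [← Walk.length_eq_zero_iff, hq]
      have := (Walk.not_nil_iff_lt_length).mp hp
      omega
    refine ⟨q.penultimate, q.concat (q.adj_penultimate hq0).symm, by simp [hq], ?_⟩
    rw [Walk.penultimate_concat, Sym2.eq_swap, hqp]

variable [Fintype V] [DecidableEq V] [DecidableRel G.Adj]

lemma card_sub_one_le_card_walks (hG : G.Connected) {u : V} {L : ℕ}
    (hL : ∀ v, G.dist u v ≤ L) :
    Fintype.card V - 1 ≤ #(univ.sigma fun v => G.finsetWalkLength L u v) := by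
  let farEnd : (Σ z, G.Walk u z) → V := fun q =>
    if G.dist u q.2.penultimate < G.dist u q.1 then q.1 else q.2.penultimate
  rw [← card_univ, ← card_erase_of_mem (mem_univ u)]
  refine card_le_card_of_surjOn farEnd fun v hv => ?_
  have hvu : v ≠ u := ne_of_mem_erase hv
  obtain ⟨p, hp⟩ := hG.exists_walk_length_eq_dist u v
  have hp0 : ¬p.Nil := fun h => hvu (h.eq.symm)
  have hpen : G.dist u p.penultimate < G.dist u v := by
    have := (Walk.not_nil_iff_lt_length).mp hp0
    calc G.dist u p.penultimate ≤ p.dropLast.length := dist_le _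
      _ < G.dist u v := by rw [Walk.length_dropLast]; omega
  obtain ⟨z, q, hq, hqp⟩ := exists_walk_length_eq_same_last_edge p hp0 (hp ▸ hL v)
  refine ⟨⟨z, q⟩, by simpa [mem_finsetWalkLength_iff] using hq, ?_⟩
  rcases Sym2.eq_iff.mp hqp with ⟨h1, rfl⟩ | ⟨h1, rfl⟩
  · simp [farEnd, h1, hpen]
  · simp [farEnd, h1, not_lt_of_gt hpen]

end Walks

section Spectral

open Matrix

variable {ι : Type*} [Fintype ι] {A : Matrix ι ι ℝ}

lemma abs_dotProduct_mulVec_le_of_nonneg (h0 : ∀ i j, 0 ≤ A i j) (x : ι → ℝ) :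
    |x ⬝ᵥ (A *ᵥ x)| ≤ |x| ⬝ᵥ (A *ᵥ |x|) := by
  simp only [dotProduct, mulVec, mul_sum]
  refine (abs_sum_le_sum_abs _ _).trans (sum_le_sum fun p _ => ?_)
  refine (abs_sum_le_sum_abs _ _).trans (le_of_eq (sum_congr rfl fun q _ => ?_))
  simp [abs_mul, abs_of_nonneg (h0 p q)]

variable [DecidableEq ι]

lemma dotProduct_pow_mulVec_eq_sum_eigenvalues (hA : A.IsHermitian) (k : ℕ) (x : ι → ℝ) :
    x ⬝ᵥ (A ^ k *ᵥ x) =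
      ∑ i, hA.eigenvalues i ^ k * (star (hA.eigenvectorUnitary : Matrix ι ι ℝ) *ᵥ x) i ^ 2 := by
  set U : Matrix ι ι ℝ := (hA.eigenvectorUnitary : Matrix ι ι ℝ)
  have hAk : A ^ k = U * diagonal (fun i => hA.eigenvalues i ^ k) * star U := by
    conv_lhs => rw [hA.spectral_theorem]
    rw [← map_pow, Unitary.conjStarAlgAut_apply, diagonal_pow]
    rfl
  have hUt : star U = Uᵀ := rfl
  rw [hAk, ← mulVec_mulVec, ← mulVec_mulVec, dotProduct_mulVec, ← mulVec_transpose, ← hUt]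
  simp only [dotProduct, mulVec_diagonal]
  exact sum_congr rfl fun i _ => by ring

lemma sum_sq_star_eigenvectorUnitary_mulVec (hA : A.IsHermitian) (x : ι → ℝ) :
    ∑ i, (star (hA.eigenvectorUnitary : Matrix ι ι ℝ) *ᵥ x) i ^ 2 = x ⬝ᵥ x := by
  simpa using (dotProduct_pow_mulVec_eq_sum_eigenvalues hA 0 x).symm

lemma dotProduct_pow_mulVec_le_mul (hA : A.IsHermitian) {k : ℕ} {c : ℝ}
    (hc : ∀ i, hA.eigenvalues i ^ k ≤ c) (x : ι → ℝ) :
    x ⬝ᵥ (A ^ k *ᵥ x) ≤ c * (x ⬝ᵥ x) := by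
  rw [dotProduct_pow_mulVec_eq_sum_eigenvalues hA, ← sum_sq_star_eigenvectorUnitary_mulVec hA,
    mul_sum]
  exact sum_le_sum fun i _ => mul_le_mul_of_nonneg_right (hc i) (sq_nonneg _)

lemma dotProduct_mulVec_le_iSup_eigenvalues_mul (hA : A.IsHermitian) (x : ι → ℝ) :
    x ⬝ᵥ (A *ᵥ x) ≤ (⨆ i, hA.eigenvalues i) * (x ⬝ᵥ x) := by
  simpa using dotProduct_pow_mulVec_le_mul hA (k := 1)
    (fun i => by simpa using le_ciSup (Set.finite_range hA.eigenvalues).bddAbove i) x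

lemma abs_eigenvalues_le_iSup_of_nonneg (hA : A.IsHermitian) (h0 : ∀ i j, 0 ≤ A i j) (j : ι) :
    |hA.eigenvalues j| ≤ ⨆ i, hA.eigenvalues i := by
  let U : Matrix ι ι ℝ := hA.eigenvectorUnitary
  let b : ι → ℝ := U *ᵥ Pi.single j 1
  have hb : star U *ᵥ b = Pi.single j 1 := by
    rw [mulVec_mulVec, (mem_unitaryGroup_iff').mp hA.eigenvectorUnitary.2, one_mulVec]
  have hbb : |b| ⬝ᵥ |b| = 1 := by
    rw [show |b| ⬝ᵥ |b| = b ⬝ᵥ b by simp [dotProduct], ← sum_sq_star_eigenvectorUnitary_mulVec hA,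
      hb]
    simp [Pi.single_apply]
  have hbAb : hA.eigenvalues j = b ⬝ᵥ (A *ᵥ b) := by
    have := dotProduct_pow_mulVec_eq_sum_eigenvalues hA 1 b
    rw [pow_one, hb] at this
    simp [this, Pi.single_apply]
  calc |hA.eigenvalues j| = |b ⬝ᵥ (A *ᵥ b)| := by rw [hbAb]
    _ ≤ |b| ⬝ᵥ (A *ᵥ |b|) := abs_dotProduct_mulVec_le_of_nonneg h0 b
    _ ≤ ⨆ i, hA.eigenvalues i := by
      simpa [hbb] using dotProduct_mulVec_le_iSup_eigenvalues_mul hA |b|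

lemma dotProduct_pow_mulVec_le_of_nonneg (hA : A.IsHermitian) (h0 : ∀ i j, 0 ≤ A i j) (k : ℕ)
    (x : ι → ℝ) : x ⬝ᵥ (A ^ k *ᵥ x) ≤ (⨆ i, hA.eigenvalues i) ^ k * (x ⬝ᵥ x) :=
  dotProduct_pow_mulVec_le_mul hA (fun i => (le_abs_self _).trans <| (abs_pow _ k).trans_le <|
    pow_le_pow_left₀ (abs_nonneg _) (abs_eigenvalues_le_iSup_of_nonneg hA h0 i) k) x

end Spectral

lemma exp_sub_self_le_exp_sub_self {a b : ℝ} (ha : 0 ≤ a) (hab : a ≤ b) :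
    exp a - a ≤ exp b - b := by
  have hexp : exp b = exp a * exp (b - a) := by rw [← exp_add, add_sub_cancel]
  nlinarith [add_one_le_exp (b - a), one_le_exp ha]

lemma exp_add_card_sub_one_sub_lt_sum_exp {ι : Type*} [Fintype ι] [DecidableEq ι] (a : ι → ℝ)
    (ha : ∑ i, a i = 0) {i₀ : ι} (hi₀ : a i₀ ≠ 0) :
    exp (a i₀) + ((Fintype.card ι : ℝ) - 1) - a i₀ < ∑ i, exp (a i) := by
  have hrest : ∑ i ∈ univ.erase i₀, a i = -a i₀ := by
    linarith [add_sum_erase univ a (mem_univ i₀)]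
  obtain ⟨j, hj, hj0⟩ : ∃ j ∈ univ.erase i₀, a j ≠ 0 := by
    by_contra! h
    exact hi₀ (neg_eq_zero.mp (hrest ▸ sum_eq_zero h))
  have hlin : ∑ i ∈ univ.erase i₀, (a i + 1) < ∑ i ∈ univ.erase i₀, exp (a i) :=
    sum_lt_sum (fun i _ => by linarith [add_one_le_exp (a i)])
      ⟨j, hj, by linarith [add_one_lt_exp hj0]⟩
  rw [sum_add_distrib, hrest, sum_const, card_erase_of_mem (mem_univ i₀), card_univ,
    nsmul_one, Nat.cast_sub (Fintype.card_pos_iff.mpr ⟨i₀⟩)] at hlin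
  rw [← add_sum_erase univ _ (mem_univ i₀)]
  push_cast at hlin
  linarith

section Graph

open SimpleGraph Matrix

lemma adjMatrix_nonneg {V α : Type*} (G : SimpleGraph V) [DecidableRel G.Adj] [Zero α] [One α]
    [Preorder α] [ZeroLEOneClass α] (v w : V) : 0 ≤ G.adjMatrix α v w := by
  rw [adjMatrix_apply]
  split_ifs
  exacts [zero_le_one, le_rfl]

lemma card_sub_one_le_sum_adjMatrix_pow {V : Type*} [Fintype V] [DecidableEq V]
    {G : SimpleGraph V} [DecidableRel G.Adj] (hG : G.Connected) {u : V} {L : ℕ}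
    (hL : ∀ v, G.dist u v ≤ L) :
    (Fintype.card V : ℝ) - 1 ≤ ∑ v, (G.adjMatrix ℝ ^ L) u v := by
  have hcard := card_sub_one_le_card_walks hG hL
  rw [card_sigma, Nat.sub_le_iff_le_add] at hcard
  simp only [adjMatrix_pow_apply_eq_card_walk, card_set_walk_length_eq]
  rw [sub_le_iff_le_add]
  exact_mod_cast hcard

lemma card_sub_one_le_lam1_pow {n : ℕ} {G : SimpleGraph (Fin n)} [DecidableRel G.Adj]
    (hG : G.Connected) {L : ℕ} (hL : ∀ u v, G.dist u v ≤ L) :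
    (n : ℝ) - 1 ≤ lam1 G ^ L := by
  have hn : (0 : ℝ) < n := by exact_mod_cast Fin.pos_iff_nonempty.mpr hG.nonempty
  have hupper : (1 : Fin n → ℝ) ⬝ᵥ (G.adjMatrix ℝ ^ L *ᵥ 1) ≤ lam1 G ^ L * n := by
    simpa [lam1, eig] using dotProduct_pow_mulVec_le_of_nonneg (adjMatrix_isHermitian G)
      (adjMatrix_nonneg G) L 1
  have hlower : n * ((n : ℝ) - 1) ≤ (1 : Fin n → ℝ) ⬝ᵥ (G.adjMatrix ℝ ^ L *ᵥ 1) := by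
    calc n * ((n : ℝ) - 1)
        = ∑ _u : Fin n, ((Fintype.card (Fin n) : ℝ) - 1) := by simp [mul_sub]
      _ ≤ ∑ u, ∑ v, (G.adjMatrix ℝ ^ L) u v :=
        sum_le_sum fun u _ => card_sub_one_le_sum_adjMatrix_pow hG (hL u)
      _ = (1 : Fin n → ℝ) ⬝ᵥ (G.adjMatrix ℝ ^ L *ᵥ 1) := by simp [dotProduct, mulVec]
  exact le_of_mul_le_mul_left (hlower.trans (hupper.trans_eq (mul_comm _ _))) hn

variable {n : ℕ} (G : SimpleGraph (Fin n)) [DecidableRel G.Adj]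

lemma sum_eig_eq_zero : ∑ i, eig G i = 0 := by
  have := (adjMatrix_isHermitian G).trace_eq_sum_eigenvalues
  rw [trace_adjMatrix] at this
  simpa [eig] using this.symm

variable [Nonempty (Fin n)]

lemma lam1_nonneg : 0 ≤ lam1 G :=
  (abs_nonneg _).trans
    (abs_eigenvalues_le_iSup_of_nonneg _ (adjMatrix_nonneg G) (Classical.arbitrary _))

lemma exp_lam1_add_sub_lt_EE (h : lam1 G ≠ 0) :
    exp (lam1 G) + ((n : ℝ) - 1) - lam1 G < EE G := by
  obtain ⟨i₀, hi₀⟩ : ∃ i, eig G i = lam1 G := exists_eq_ciSup_of_finite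
  have := exp_add_card_sub_one_sub_lt_sum_exp (eig G) (sum_eig_eq_zero G) (hi₀ ▸ h)
  rwa [hi₀, Fintype.card_fin] at this

end Graph

theorem stmt4 {n : ℕ} (hn : 2 ≤ n) (G : SimpleGraph (Fin n)) [DecidableRel G.Adj]
    (hG : G.Connected) (D : ℕ) (hD : D = G.diam) :
    EE G > Real.exp (((n : ℝ) - 1) ^ ((1 : ℝ) / D)) + ((n : ℝ) - 1) -
      ((n : ℝ) - 1) ^ ((1 : ℝ) / D) := by
  have : Nontrivial (Fin n) := Fin.nontrivial_iff_two_le.mpr hn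
  have hediam : G.ediam ≠ ⊤ := SimpleGraph.connected_iff_ediam_ne_top.mp hG
  have hD0 : D ≠ 0 := hD ▸ SimpleGraph.diam_ne_zero_of_ediam_ne_top hediam
  have hn1 : (1 : ℝ) ≤ n - 1 := by
    have : (2 : ℝ) ≤ n := by exact_mod_cast hn
    linarith
  have hpow : (n : ℝ) - 1 ≤ lam1 G ^ D :=
    card_sub_one_le_lam1_pow hG fun u v => hD ▸ SimpleGraph.dist_le_diam hediam
  have hlam0 : lam1 G ≠ 0 := by
    rintro h
    rw [h, zero_pow hD0] at hpow
    linarith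
  have hroot : ((n : ℝ) - 1) ^ ((1 : ℝ) / D) ≤ lam1 G := by
    rwa [one_div, rpow_inv_le_iff_of_pos (by linarith) (lam1_nonneg G) (by positivity),
      rpow_natCast]
  calc EE G > exp (lam1 G) + ((n : ℝ) - 1) - lam1 G := exp_lam1_add_sub_lt_EE G hlam0
    _ ≥ _ := by
        linarith [exp_sub_self_le_exp_sub_self (rpow_nonneg (by linarith) _) hroot]

end EstradaIndexPaper
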